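/- arXiv:2007.04107 — 4 statements merged into one kernel-verified Lean document; each statement's English description precedes it below -/
import Mathlib

section
/- Let A be an m×n matrix with rational entries and b ∈ ℚ^m. If x ∈ ℝ^n satisfies Ax = b, then there exist finitely many rational solutions x₁, …, x_k ∈ ℚ^n with A x_t = b for all t, and positive real numbers γ₁, …, γ_k with Σ γ_t = 1 such that x = Σ γ_t x_t. -/
open Matrix

/-- Casting a rational matrix-vector product to the reals. -/
lemma cast_mulVec {p q : ℕ} (M : Matrix (Fin p) (Fin q) ℚ) (v : Fin q → ℚ) :
    (M.map (fun r : ℚ => (r : ℝ))).mulVec (fun j => (v j : ℝ))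
      = fun i => ((M.mulVec v) i : ℝ) := by
  funext i
  simp only [Matrix.mulVec, dotProduct, Matrix.map_apply]
  push_cast
  rfl

lemma cast_matrix_mul {p q r : ℕ} (M : Matrix (Fin p) (Fin q) ℚ) (N : Matrix (Fin q) (Fin r) ℚ) :
    (M * N).map (fun t : ℚ => (t : ℝ))
      = M.map (fun t : ℚ => (t : ℝ)) * N.map (fun t : ℚ => (t : ℝ)) := by
  have := Matrix.map_mul (L := M) (M := N) (f := Rat.castHom ℝ)
  simpa using this

lemma convex_aux (m n : ℕ) (A : Matrix (Fin m) (Fin n) ℚ) (b : Fin m → ℚ) :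
    ∀ (d : ℕ) (x : Fin n → ℝ) (x₀ : Fin n → ℚ) (w : Fin d → Fin n → ℚ) (c : Fin d → ℝ),
      A.mulVec x₀ = b → (∀ i, A.mulVec (w i) = 0) →
      (∀ j, x j = (x₀ j : ℝ) + ∑ i, c i * (w i j : ℝ)) →
      ∃ (k : ℕ) (_ : 0 < k) (xs : Fin k → (Fin n → ℚ)) (γ : Fin k → ℝ),
        (∀ t, A.mulVec (xs t) = b) ∧
        (∀ t, 0 < γ t) ∧
        (∑ t, γ t) = 1 ∧
        (∀ j, x j = ∑ t, γ t * (xs t j : ℝ)) := by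
  intro d
  induction d with
  | zero =>
    intro x x₀ w c h0 hw hx
    refine ⟨1, one_pos, fun _ => x₀, fun _ => 1, fun _ => h0, fun _ => one_pos, by simp, ?_⟩
    intro j
    have := hx j
    simpa using this
  | succ d ih =>
    intro x x₀ w c h0 hw hx
    set cL : ℝ := c (Fin.last d) with hcL
    obtain ⟨a, ha⟩ := exists_rat_lt cL
    obtain ⟨e, he⟩ := exists_rat_gt cL
    have hae : (a : ℝ) < e := ha.trans he
    set t : ℝ := ((e : ℝ) - cL) / ((e : ℝ) - a) with hden
    have hpos : (0:ℝ) < (e : ℝ) - a := by linarith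
    have ht0 : 0 < t := div_pos (by linarith) hpos
    have ht1 : t < 1 := (div_lt_one hpos).2 (by linarith)
    have hid : t * a + (1 - t) * e = cL := by
      rw [hden, div_mul_eq_mul_div, one_sub_div hpos.ne', div_mul_eq_mul_div, ← add_div,
        div_eq_iff hpos.ne']
      ring
    -- the two shifted points
    have key : ∀ (r : ℚ), ∀ j, (x j + ((r:ℝ) - cL) * (w (Fin.last d) j : ℝ))
        = ((x₀ + r • w (Fin.last d)) j : ℝ)
          + ∑ i : Fin d, (c (Fin.castSucc i)) * ((w (Fin.castSucc i)) j : ℝ) := by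
      intro r j
      have := hx j
      rw [Fin.sum_univ_castSucc] at this
      push_cast [Pi.add_apply, Pi.smul_apply, smul_eq_mul]
      rw [this]
      ring
    have hbase : ∀ (r : ℚ), A.mulVec (x₀ + r • w (Fin.last d)) = b := by
      intro r
      rw [Matrix.mulVec_add, Matrix.mulVec_smul, h0, hw, smul_zero, add_zero]
    obtain ⟨k₁, hk₁, xs₁, γ₁, hsol₁, hγ₁, hsum₁, hx₁⟩ :=
      ih (fun j => x j + ((a:ℝ) - cL) * (w (Fin.last d) j : ℝ)) (x₀ + a • w (Fin.last d))
        (fun i => w (Fin.castSucc i)) (fun i => c (Fin.castSucc i)) (hbase a)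
        (fun i => hw _) (fun j => key a j)
    obtain ⟨k₂, hk₂, xs₂, γ₂, hsol₂, hγ₂, hsum₂, hx₂⟩ :=
      ih (fun j => x j + ((e:ℝ) - cL) * (w (Fin.last d) j : ℝ)) (x₀ + e • w (Fin.last d))
        (fun i => w (Fin.castSucc i)) (fun i => c (Fin.castSucc i)) (hbase e)
        (fun i => hw _) (fun j => key e j)
    refine ⟨k₁ + k₂, by omega, Fin.append xs₁ xs₂,
        Fin.append (fun s => t * γ₁ s) (fun s => (1 - t) * γ₂ s), ?_, ?_, ?_, ?_⟩
    · intro s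
      refine Fin.addCases (fun i => ?_) (fun i => ?_) s
      · rw [Fin.append_left]; exact hsol₁ i
      · rw [Fin.append_right]; exact hsol₂ i
    · intro s
      refine Fin.addCases (fun i => ?_) (fun i => ?_) s
      · rw [Fin.append_left]; exact mul_pos ht0 (hγ₁ i)
      · rw [Fin.append_right]; exact mul_pos (by linarith) (hγ₂ i)
    · rw [Fin.sum_univ_add]
      simp only [Fin.append_left, Fin.append_right]
      rw [← Finset.mul_sum, ← Finset.mul_sum, hsum₁, hsum₂]
      ring
    · intro j
      rw [Fin.sum_univ_add]
      simp only [Fin.append_left, Fin.append_right]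
      have h1 : ∑ i : Fin k₁, t * γ₁ i * ((xs₁ i j : ℚ) : ℝ)
          = t * (x j + ((a:ℝ) - cL) * (w (Fin.last d) j : ℝ)) := by
        rw [hx₁ j, Finset.mul_sum]
        exact Finset.sum_congr rfl (fun i _ => by ring)
      have h2 : ∑ i : Fin k₂, (1 - t) * γ₂ i * ((xs₂ i j : ℚ) : ℝ)
          = (1 - t) * (x j + ((e:ℝ) - cL) * (w (Fin.last d) j : ℝ)) := by
        rw [hx₂ j, Finset.mul_sum]
        exact Finset.sum_congr rfl (fun i _ => by ring)
      rw [h1, h2]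
      linear_combination (-((w (Fin.last d) j : ℚ) : ℝ)) * hid

/-- Every real solution of a rational linear system `A x = b` is a convex
combination of finitely many rational solutions. -/
theorem rational_convex_decomposition_of_linear_system
    (m n : ℕ) (A : Matrix (Fin m) (Fin n) ℚ) (b : Fin m → ℚ) (x : Fin n → ℝ)
    (hx : (A.map (fun q : ℚ => (q : ℝ))).mulVec x = fun i => (b i : ℝ)) :
    ∃ (k : ℕ) (_ : 0 < k) (xs : Fin k → (Fin n → ℚ)) (γ : Fin k → ℝ),
      (∀ t, A.mulVec (xs t) = b) ∧
      (∀ t, 0 < γ t) ∧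
      (∑ t, γ t) = 1 ∧
      (∀ j, x j = ∑ t, γ t * (xs t j : ℝ)) := by
  classical
  set f : (Fin n → ℚ) →ₗ[ℚ] (Fin m → ℚ) := A.mulVecLin with hf
  have htmf : LinearMap.toMatrix' f = A := by
    rw [hf, ← Matrix.toLin'_apply', LinearMap.toMatrix'_toLin']
  set Aℝ : Matrix (Fin m) (Fin n) ℝ := A.map (fun q : ℚ => (q : ℝ)) with hAR
  -- Step 1: a rational solution x₀ exists
  obtain ⟨C, hC⟩ := Submodule.exists_isCompl (LinearMap.range f)
  set Pr : (Fin m → ℚ) →ₗ[ℚ] (Fin m → ℚ) :=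
    (LinearMap.range f).subtype ∘ₗ (LinearMap.range f).projectionOnto C hC with hPrdef
  have hPr_fix : ∀ y ∈ LinearMap.range f, Pr y = y := by
    intro y hy
    have := Submodule.linearProjOfIsCompl_apply_left hC ⟨y, hy⟩
    simp only [hPrdef, LinearMap.comp_apply, Submodule.coe_subtype]
    rw [show y = ((⟨y, hy⟩ : LinearMap.range f) : Fin m → ℚ) from rfl, this]
  set G : Matrix (Fin m) (Fin m) ℚ := LinearMap.toMatrix' Pr with hG
  have hGA : G * A = A := by
    have h1 : Pr ∘ₗ f = f := LinearMap.ext fun y => hPr_fix _ ⟨y, rfl⟩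
    have h2 := LinearMap.toMatrix'_comp Pr f
    rw [h1, htmf] at h2
    exact h2.symm
  have hGb : G.mulVec b = b := by
    have hGAR : G.map (fun q : ℚ => (q : ℝ)) * Aℝ = Aℝ := by
      rw [hAR, ← cast_matrix_mul, hGA]
    have h1 : (G.map (fun q : ℚ => (q : ℝ))).mulVec (fun i => (b i : ℝ))
        = fun i => (b i : ℝ) := by
      rw [← hx, Matrix.mulVec_mulVec, hGAR]
    rw [cast_mulVec] at h1
    funext i
    exact_mod_cast congrFun h1 i
  have hPrb : Pr b = b := by
    have hmv : G.mulVec b = Pr b := by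
      rw [hG, ← Matrix.toLin'_apply, Matrix.toLin'_toMatrix']
    rw [← hmv, hGb]
  obtain ⟨x₀, hx₀⟩ : ∃ x₀ : Fin n → ℚ, A.mulVec x₀ = b := by
    have hmem : Pr b ∈ LinearMap.range f := by
      simp only [hPrdef, LinearMap.comp_apply, Submodule.coe_subtype]
      exact Subtype.coe_prop _
    rw [hPrb] at hmem
    obtain ⟨x₀, hx₀⟩ := hmem
    exact ⟨x₀, hx₀⟩
  -- Step 2: the kernel projection
  obtain ⟨CK, hCK⟩ := Submodule.exists_isCompl (LinearMap.ker f)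
  set P : (Fin n → ℚ) →ₗ[ℚ] (Fin n → ℚ) :=
    (LinearMap.ker f).subtype ∘ₗ (LinearMap.ker f).projectionOnto CK hCK with hPdef
  have hP_mem : ∀ y, P y ∈ LinearMap.ker f := by
    intro y
    simp only [hPdef, LinearMap.comp_apply, Submodule.coe_subtype]
    exact Subtype.coe_prop _
  have hP_fix : ∀ y ∈ LinearMap.ker f, P y = y := by
    intro y hy
    have := Submodule.linearProjOfIsCompl_apply_left hCK ⟨y, hy⟩
    simp only [hPdef, LinearMap.comp_apply, Submodule.coe_subtype]
    rw [show y = ((⟨y, hy⟩ : LinearMap.ker f) : Fin n → ℚ) from rfl, this]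
  have hle : LinearMap.ker f ≤ LinearMap.ker (LinearMap.id - P) := by
    intro y hy
    simp only [LinearMap.mem_ker, LinearMap.sub_apply, LinearMap.id_apply, hP_fix y hy, sub_self]
  set Q : (Fin m → ℚ) →ₗ[ℚ] (Fin n → ℚ) :=
    ((LinearMap.ker f).liftQ (LinearMap.id - P) hle)
      ∘ₗ (f.quotKerEquivRange.symm : LinearMap.range f →ₗ[ℚ] ((Fin n → ℚ) ⧸ LinearMap.ker f))
      ∘ₗ (LinearMap.range f).projectionOnto C hC with hQdef
  have hQf : Q ∘ₗ f = LinearMap.id - P := by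
    apply LinearMap.ext
    intro y
    have hproj : (LinearMap.range f).projectionOnto C hC (f y)
        = ⟨f y, ⟨y, rfl⟩⟩ := by
      have := Submodule.linearProjOfIsCompl_apply_left hC ⟨f y, ⟨y, rfl⟩⟩
      exact this
    simp only [hQdef, LinearMap.comp_apply, hproj, LinearEquiv.coe_coe]
    rw [LinearMap.quotKerEquivRange_symm_apply_image f y ⟨y, rfl⟩,
      Submodule.mkQ_apply, Submodule.liftQ_apply]
  set GP : Matrix (Fin n) (Fin n) ℚ := LinearMap.toMatrix' P with hGP
  set QM : Matrix (Fin n) (Fin m) ℚ := LinearMap.toMatrix' Q with hQM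
  have hmat : (1 : Matrix (Fin n) (Fin n) ℚ) - GP = QM * A := by
    have h2 := LinearMap.toMatrix'_comp Q f
    rw [hQf, htmf] at h2
    rw [map_sub, LinearMap.toMatrix'_id] at h2
    exact h2
  -- the real difference vector lies in the kernel
  set z : Fin n → ℝ := fun j => x j - ((x₀ j : ℚ) : ℝ) with hz
  have hzker : Aℝ.mulVec z = 0 := by
    have h1 : Aℝ.mulVec (fun j => ((x₀ j : ℚ) : ℝ)) = fun i => (b i : ℝ) := by
      rw [hAR, cast_mulVec, hx₀]
    have h2 : z = x - fun j => ((x₀ j : ℚ) : ℝ) := rfl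
    rw [h2, Matrix.mulVec_sub, hx, h1, sub_self]
  have hzeq : z = (GP.map (fun q : ℚ => (q : ℝ))).mulVec z := by
    have hmatR : (1 : Matrix (Fin n) (Fin n) ℝ) - GP.map (fun q : ℚ => (q : ℝ))
        = QM.map (fun q : ℚ => (q : ℝ)) * Aℝ := by
      have := congrArg (Matrix.map · (fun q : ℚ => (q : ℝ))) hmat
      rw [hAR, ← cast_matrix_mul, ← this]
      have h1 : ((1 : Matrix (Fin n) (Fin n) ℚ) - GP).map (fun q : ℚ => (q : ℝ))
          = (1 : Matrix (Fin n) (Fin n) ℝ) - GP.map (fun q : ℚ => (q : ℝ)) := by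
        funext i j
        by_cases h : i = j <;>
          simp [Matrix.map_apply, Matrix.sub_apply, Matrix.one_apply, h]
      rw [h1]
    have h3 : ((1 : Matrix (Fin n) (Fin n) ℝ) - GP.map (fun q : ℚ => (q : ℝ))).mulVec z = 0 := by
      rw [hmatR, ← Matrix.mulVec_mulVec, hzker, Matrix.mulVec_zero]
    rw [Matrix.sub_mulVec, Matrix.one_mulVec, sub_eq_zero] at h3
    exact h3
  -- columns of GP are rational kernel elements
  set w : Fin n → Fin n → ℚ := fun t j => GP j t with hw
  have hwker : ∀ t, A.mulVec (w t) = 0 := by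
    intro t
    have hcol : w t = P (fun j' => if j' = t then 1 else 0) := by
      funext j
      simp only [hw, hGP, LinearMap.toMatrix'_apply]
      rw [show (Pi.single t 1 : Fin n → ℚ) = fun j' => if j' = t then 1 else 0 from
        funext fun j' => Pi.single_apply t 1 j']
    have hmem := hP_mem (fun j' => if j' = t then 1 else 0)
    rw [LinearMap.mem_ker] at hmem
    rw [hcol]
    simpa [hf, Matrix.mulVecLin_apply] using hmem
  have hdecomp : ∀ j, x j = (x₀ j : ℝ) + ∑ t, z t * ((w t j : ℚ) : ℝ) := by
    intro j
    have h1 : z j = ∑ t, (GP j t : ℝ) * z t := by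
      have := congrFun hzeq j
      simpa [Matrix.mulVec, dotProduct, Matrix.map_apply] using this
    have h2 : x j = (x₀ j : ℝ) + z j := by simp [hz]
    rw [h2, h1]
    congr 1
    exact Finset.sum_congr rfl fun t _ => by rw [mul_comm]
  exact convex_aux m n A b n x x₀ w z hx₀ hwker hdecomp
end

section
/- Let P ⊂ ℝ^n be defined by finitely many rational affine inequalities, i.e. P = {x : ⟨a_i, x⟩ ≤ b_i, i = 1,…,m} with a_i ∈ ℚ^n, b_i ∈ ℚ. Then for every x ∈ P and every ε > 0, there exist rational points y₁, …, y_k ∈ P ∩ ℚ^n with ‖y_t − x‖_∞ < ε and positive reals γ_t summing to 1 such that x = Σ γ_t y_t. -/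
open Finset

private lemma aux_sum_prod_bool {ι : Type*} [Fintype ι] [DecidableEq ι] (f : ι → Bool → ℝ) :
    ∑ c : ι → Bool, ∏ s, f s (c s) = ∏ s, (f s true + f s false) := by
  classical
  rw [← Fintype.prod_sum f]
  exact Finset.prod_congr rfl fun s _ => by rw [Fintype.sum_bool]

set_option maxHeartbeats 1000000 in
/-- Any real point of a rational polyhedron is a convex combination of nearby
rational points of the polyhedron. -/
theorem rational_convex_decomposition_in_rational_polyhedron
    (m n : ℕ) (a : Fin m → (Fin n → ℚ)) (b : Fin m → ℚ)
    (P : Set (Fin n → ℝ))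
    (hP : P = {x | ∀ i, (∑ j, (a i j : ℝ) * x j) ≤ (b i : ℝ)})
    (x : Fin n → ℝ) (hx : x ∈ P) (ε : ℝ) (hε : 0 < ε) :
    ∃ (k : ℕ) (_ : 0 < k) (y : Fin k → (Fin n → ℚ)) (γ : Fin k → ℝ),
      (∀ t, (fun j => (y t j : ℝ)) ∈ P) ∧
      (∀ t, ‖(fun j => (y t j : ℝ)) - x‖ < ε) ∧
      (∀ t, 0 < γ t) ∧
      (∑ t, γ t) = 1 ∧
      (∀ j, x j = ∑ t, γ t * (y t j : ℝ)) := by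
  classical
  subst hP
  have hxP : ∀ i, (∑ j, (a i j : ℝ) * x j) ≤ (b i : ℝ) := hx
  -- the ℚ-subspace of ℝ spanned by 1 and the coordinates of x
  set S : Set ℝ := insert (1:ℝ) (Set.range x) with hS
  have hSfin : S.Finite := (Set.finite_range x).insert 1
  set V : Submodule ℚ ℝ := Submodule.span ℚ S with hV
  haveI : FiniteDimensional ℚ V := FiniteDimensional.span_of_finite ℚ hSfin
  have h1V : (1:ℝ) ∈ V := Submodule.subset_span (Set.mem_insert _ _)
  have hxVmem : ∀ j, x j ∈ V := fun j => Submodule.subset_span (Set.mem_insert_of_mem _ ⟨j, rfl⟩)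
  set one : V := ⟨1, h1V⟩ with hone_def
  have hone : one ≠ 0 := by
    intro h
    have : (1:ℝ) = 0 := congrArg Subtype.val h
    norm_num at this
  have hli : LinearIndepOn ℚ id ({one} : Set V) := LinearIndepOn.singleton hone
  set B : Module.Basis (hli.extend (Set.subset_univ _)) ℚ V := Module.Basis.extend hli with hB
  haveI : Fintype (hli.extend (Set.subset_univ _)) := FiniteDimensional.fintypeBasisIndex B
  have hone_mem : one ∈ hli.extend (Set.subset_univ _) := hli.subset_extend _ rfl
  set i0 : hli.extend (Set.subset_univ _) := ⟨one, hone_mem⟩ with hi0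
  have hBi0 : B i0 = one := Module.Basis.extend_apply_self hli i0
  set E : (hli.extend (Set.subset_univ _) : Set V) → ℝ := fun s => ((B s : V) : ℝ) with hE
  have hEi0 : E i0 = 1 := by rw [hE]; simp only [hBi0]; rfl
  -- representation of elements of V in terms of the basis
  have rep : ∀ v : V, (v : ℝ) = ∑ s, (B.repr v s : ℝ) * E s := by
    intro v
    have h := congrArg Subtype.val (B.sum_repr v)
    rw [← h, AddSubmonoidClass.coe_finset_sum]
    exact Finset.sum_congr rfl fun s _ => by rw [SetLike.val_smul, Rat.smul_def]
  set xV : Fin n → V := fun j => ⟨x j, hxVmem j⟩ with hxVdef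
  set cf : Fin n → _ := fun j => B.repr (xV j) with hcf
  have hxrep : ∀ j, x j = ∑ s, (cf j s : ℝ) * E s := fun j => rep (xV j)
  set u : Fin m → V := fun i => (∑ j, a i j • xV j) - b i • one with hu
  have hcoeu : ∀ i, ((u i : ℝ)) = (∑ j, (a i j : ℝ) * x j) - b i := by
    intro i
    rw [hu]
    simp only [AddSubgroupClass.coe_sub, AddSubmonoidClass.coe_finset_sum, SetLike.val_smul,
      Rat.smul_def]
    simp [hxVdef, hone_def]
  -- the ℚ-identity satisfied by substitutions fixing the coordinate of 1
  have keyQ : ∀ (i : Fin m) (r : (hli.extend (Set.subset_univ _) : Set V) → ℚ), r i0 = 1 →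
      ∑ s, B.repr (u i) s * r s = (∑ j, a i j * (∑ s, cf j s * r s)) - b i := by
    intro i r hr
    have hru : B.repr (u i) = (∑ j, a i j • cf j) - b i • Finsupp.single i0 1 := by
      rw [hu]
      simp only [map_sub, map_sum, map_smul, hcf]
      have h1r : B.repr one = Finsupp.single i0 1 := by
        have h := B.repr_self i0
        rwa [hBi0] at h
      rw [h1r]
    rw [hru]
    simp only [Finsupp.sub_apply, Finsupp.smul_apply, Finsupp.finset_sum_apply, smul_eq_mul,
      sub_mul, Finset.sum_sub_distrib, Finset.sum_mul]
    congr 1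
    · rw [Finset.sum_comm]
      refine Finset.sum_congr rfl fun j _ => ?_
      rw [Finset.mul_sum]
      exact Finset.sum_congr rfl fun s _ => (mul_assoc _ _ _)
    · simp [Finsupp.single_apply, ite_mul, mul_ite, hr]
  -- tight constraints have all coordinates zero
  have halpha : ∀ i, (∑ j, (a i j : ℝ) * x j) = b i → ∀ s, B.repr (u i) s = 0 := by
    intro i h s
    have h0 : (u i : ℝ) = 0 := by rw [hcoeu i, h, sub_self]
    have h0' : u i = 0 := Subtype.ext h0
    rw [h0', map_zero]
    rfl
  -- the real constraints hold eventually near E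
  have hev : ∀ᶠ r in nhds E, (∀ i, ∑ s, (B.repr (u i) s : ℝ) * r s ≤ 0) ∧
      (∀ j, |(∑ s, (cf j s : ℝ) * r s) - x j| < ε) := by
    rw [Filter.eventually_and]
    constructor
    · rw [Filter.eventually_all]
      intro i
      by_cases hti : (∑ j, (a i j : ℝ) * x j) = (b i : ℝ)
      · exact Filter.Eventually.of_forall fun r => le_of_eq (by simp [halpha i hti])
      · have hcont : Continuous fun r : (hli.extend (Set.subset_univ _) : Set V) → ℝ =>
            ∑ s, (B.repr (u i) s : ℝ) * r s :=
          continuous_finset_sum _ fun s _ => continuous_const.mul (continuous_apply s)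
        have hlt : (∑ s, (B.repr (u i) s : ℝ) * E s) < 0 := by
          rw [← rep (u i), hcoeu i]
          exact sub_neg.mpr (lt_of_le_of_ne (hxP i) hti)
        have hopen : IsOpen {r : (hli.extend (Set.subset_univ _) : Set V) → ℝ |
            (∑ s, (B.repr (u i) s : ℝ) * r s) < 0} := isOpen_lt hcont continuous_const
        exact Filter.eventually_of_mem (hopen.mem_nhds hlt) fun r hr => le_of_lt hr
    · rw [Filter.eventually_all]
      intro j
      have hcont : Continuous fun r : (hli.extend (Set.subset_univ _) : Set V) → ℝ =>
          |(∑ s, (cf j s : ℝ) * r s) - x j| :=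
        ((continuous_finset_sum _ fun s _ => continuous_const.mul (continuous_apply s)).sub
          continuous_const).abs
      have hlt : |(∑ s, (cf j s : ℝ) * E s) - x j| < ε := by
        rw [← hxrep j]
        simpa using hε
      have hopen : IsOpen {r : (hli.extend (Set.subset_univ _) : Set V) → ℝ |
          |(∑ s, (cf j s : ℝ) * r s) - x j| < ε} := isOpen_lt hcont continuous_const
      exact Filter.eventually_of_mem (hopen.mem_nhds hlt) fun r hr => hr
  obtain ⟨δ, hδpos, hδ⟩ := Metric.eventually_nhds_iff.mp hev
  -- choose rational corner values and weights for each basis direction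
  have key : ∀ s : (hli.extend (Set.subset_univ _) : Set V), ∃ (ρ : Bool → ℚ) (w : Bool → ℝ),
      (∀ bb, 0 < w bb) ∧ (w true + w false = 1) ∧
      (w true * (ρ true : ℝ) + w false * (ρ false : ℝ) = E s) ∧
      (∀ bb, |(ρ bb : ℝ) - E s| < δ) ∧ (s = i0 → ∀ bb, ρ bb = 1) := by
    intro s
    by_cases hs : s = i0
    · refine ⟨fun _ => 1, fun _ => 1/2, fun _ => by norm_num, by norm_num, ?_, ?_, fun _ _ => rfl⟩
      · rw [hs, hEi0]; norm_num
      · intro bb; rw [hs, hEi0]; simpa using hδpos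
    · obtain ⟨p, hp1, hp2⟩ := exists_rat_btwn (show E s - δ < E s by linarith)
      obtain ⟨q, hq1, hq2⟩ := exists_rat_btwn (show E s < E s + δ by linarith)
      have hpq : (p : ℝ) < q := lt_trans hp2 hq1
      have hd : (0:ℝ) < (q : ℝ) - p := by linarith
      refine ⟨fun bb => if bb then p else q,
        fun bb => if bb then ((q : ℝ) - E s) / ((q : ℝ) - p) else (E s - (p : ℝ)) / ((q : ℝ) - p),
        ?_, ?_, ?_, ?_, fun h => absurd h hs⟩
      · intro bb; cases bb <;> simp only [if_true, if_false, Bool.false_eq_true] <;>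
          exact div_pos (by linarith) hd
      · simp only [if_true, if_false, Bool.false_eq_true, ↓reduceIte]
        rw [← add_div, div_eq_one_iff_eq hd.ne']
        ring
      · simp only [if_true, if_false, Bool.false_eq_true]
        field_simp
        ring
      · intro bb; cases bb <;> simp only [if_true, if_false, Bool.false_eq_true] <;>
          rw [abs_lt] <;> constructor <;> linarith
  choose ρ w hwpos hwsum hwE hρδ hρi0 using key
  -- the corner points and weights
  set Y : ((hli.extend (Set.subset_univ _) : Set V) → Bool) → Fin n → ℚ :=
    fun c j => ∑ s, cf j s * ρ s (c s) with hY
  set W : ((hli.extend (Set.subset_univ _) : Set V) → Bool) → ℝ :=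
    fun c => ∏ s, w s (c s) with hW
  have hWpos : ∀ c, 0 < W c := fun c => Finset.prod_pos fun s _ => hwpos s (c s)
  have hWsum : ∑ c, W c = 1 := by
    rw [hW, aux_sum_prod_bool w]
    rw [Finset.prod_congr rfl fun s _ => hwsum s]
    exact Finset.prod_const_one
  have hmarg : ∀ s0, ∑ c, W c * (ρ s0 (c s0) : ℝ) = E s0 := by
    intro s0
    have h1 : ∀ c : (hli.extend (Set.subset_univ _) : Set V) → Bool,
        W c * (ρ s0 (c s0) : ℝ) =
        ∏ s, (w s (c s) * (if s = s0 then (ρ s0 (c s) : ℝ) else 1)) := by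
      intro c
      rw [Finset.prod_mul_distrib, Finset.prod_ite_eq' Finset.univ s0
        (fun s => (ρ s0 (c s) : ℝ))]
      simp [hW]
    calc ∑ c, W c * (ρ s0 (c s0) : ℝ)
        = ∑ c : (hli.extend (Set.subset_univ _) : Set V) → Bool,
            ∏ s, (fun s bb => w s bb * (if s = s0 then (ρ s0 bb : ℝ) else 1)) s (c s) := by
          exact Finset.sum_congr rfl fun c _ => h1 c
      _ = ∏ s, ((fun s bb => w s bb * (if s = s0 then (ρ s0 bb : ℝ) else 1)) s true
            + (fun s bb => w s bb * (if s = s0 then (ρ s0 bb : ℝ) else 1)) s false) :=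
          aux_sum_prod_bool (fun s bb => w s bb * (if s = s0 then (ρ s0 bb : ℝ) else 1))
      _ = E s0 := by
          simp only []
          rw [Finset.prod_eq_single s0]
          · rw [if_pos rfl, if_pos rfl]
            exact hwE s0
          · intro s _ hs
            rw [if_neg hs, if_neg hs, mul_one, mul_one]
            exact hwsum s
          · intro h; exact absurd (Finset.mem_univ s0) h
  have hYcast : ∀ c j, ((Y c j : ℚ) : ℝ) = ∑ s, (cf j s : ℝ) * (ρ s (c s) : ℝ) := by
    intro c j
    rw [hY]
    push_cast
    rfl
  have hdecomp : ∀ j, x j = ∑ c, W c * (Y c j : ℝ) := by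
    intro j
    rw [hxrep j]
    calc ∑ s, (cf j s : ℝ) * E s
        = ∑ s, (cf j s : ℝ) * (∑ c, W c * (ρ s (c s) : ℝ)) :=
          Finset.sum_congr rfl fun s _ => by rw [hmarg s]
      _ = ∑ s, ∑ c, (cf j s : ℝ) * (W c * (ρ s (c s) : ℝ)) :=
          Finset.sum_congr rfl fun s _ => Finset.mul_sum _ _ _
      _ = ∑ c, ∑ s, (cf j s : ℝ) * (W c * (ρ s (c s) : ℝ)) := Finset.sum_comm
      _ = ∑ c, W c * (Y c j : ℝ) := by
          refine Finset.sum_congr rfl fun c _ => ?_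
          rw [hYcast c j, Finset.mul_sum]
          exact Finset.sum_congr rfl fun s _ => by ring
  -- the corner points are near x and in P
  have hmemnear : ∀ c : (hli.extend (Set.subset_univ _) : Set V) → Bool,
      (∀ i, (∑ j, (a i j : ℝ) * (Y c j : ℝ)) ≤ (b i : ℝ)) ∧
      (∀ j, |(Y c j : ℝ) - x j| < ε) := by
    intro c
    have hdist : dist (fun s => (ρ s (c s) : ℝ)) E < δ := by
      rw [dist_pi_lt_iff hδpos]
      intro s
      rw [Real.dist_eq]
      exact hρδ s (c s)
    obtain ⟨h1, h2⟩ := hδ hdist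
    constructor
    · intro i
      have hq := keyQ i (fun s => ρ s (c s)) (hρi0 i0 rfl (c i0))
      have hcast : (((∑ j, a i j * (∑ s, cf j s * ρ s (c s))) - b i : ℚ) : ℝ) =
          (∑ j, (a i j : ℝ) * (Y c j : ℝ)) - b i := by
        push_cast [hY]
        rfl
      have := h1 i
      rw [show (∑ s, (B.repr (u i) s : ℝ) * ((fun s => (ρ s (c s) : ℝ)) s)) =
          (((∑ s, B.repr (u i) s * ρ s (c s) : ℚ)) : ℝ) by push_cast; rfl] at this
      rw [hq, hcast] at this
      linarith
    · intro j
      have := h2 j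
      rw [show (∑ s, (cf j s : ℝ) * ((fun s => (ρ s (c s) : ℝ)) s)) = (Y c j : ℝ) by
        rw [hYcast c j]] at this
      exact this
  -- package everything via an equivalence with Fin k
  haveI : Nonempty ((hli.extend (Set.subset_univ _) : Set V) → Bool) := ⟨fun _ => true⟩
  set e := Fintype.equivFin ((hli.extend (Set.subset_univ _) : Set V) → Bool) with he
  refine ⟨Fintype.card _, Fintype.card_pos, fun t => Y (e.symm t), fun t => W (e.symm t),
    ?_, ?_, fun t => hWpos _, ?_, ?_⟩
  · intro t
    exact (hmemnear (e.symm t)).1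
  · intro t
    rw [pi_norm_lt_iff hε]
    intro j
    simpa [Real.norm_eq_abs] using (hmemnear (e.symm t)).2 j
  · rw [Equiv.sum_comp e.symm W]
    exact hWsum
  · intro j
    rw [hdecomp j]
    exact (Equiv.sum_comp e.symm fun c => W c * (Y c j : ℝ)).symm
end

section
/- Fix 1 ≤ l ≤ k, real numbers δ, d_l, d̄_l with 0 < δ ≤ d_l ≤ d̄_l, and v = (d₁, …, d_k) ∈ ℝ^k. Let v' be v with its l-th coordinate replaced by d̄_l. Suppose v' lies in the convex hull of β₁, …, β_q ∈ ℝ^k. For each j, let α_j be β_j with its l-th coordinate replaced by δ. Then v lies in the convex hull of {β₁, …, β_q, α₁, …, α_q}. -/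
/-- If the vector `v` with its `l`-th coordinate enlarged to `d̄ₗ` lies in the
convex hull of `β₁, …, β_q`, then `v` lies in the convex hull of the `βⱼ`
together with the `αⱼ` obtained by resetting the `l`-th coordinate to `δ`,
where `0 < δ ≤ vₗ ≤ d̄ₗ`. -/
theorem convex_decomposition_lower_coordinate
    (k q : ℕ) (l : Fin k) (δ dbar : ℝ) (v : Fin k → ℝ)
    (hδ : 0 < δ) (hδd : δ ≤ v l) (hdd : v l ≤ dbar)
    (β : Fin q → (Fin k → ℝ))
    (hv' : Function.update v l dbar ∈ convexHull ℝ (Set.range β)) :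
    v ∈ convexHull ℝ
      (Set.range β ∪ Set.range (fun j => Function.update (β j) l δ)) := by
  classical
  set v' := Function.update v l dbar with hv'def
  -- the affine map resetting the `l`-th coordinate to `δ`
  let L : (Fin k → ℝ) →ₗ[ℝ] (Fin k → ℝ) :=
    { toFun := fun x => Function.update x l 0
      map_add' := by
        intro x y; ext i; by_cases h : i = l <;> simp [Function.update, h]
      map_smul' := by
        intro c x; ext i; by_cases h : i = l <;> simp [Function.update, h] }
  let f : (Fin k → ℝ) →ᵃ[ℝ] (Fin k → ℝ) :=
    { toFun := fun x => Function.update x l δ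
      linear := L
      map_vadd' := by
        intro p w; ext i; by_cases h : i = l <;>
          simp [L, Function.update, h] }
  have hfv' : f v' ∈ convexHull ℝ
      (Set.range (fun j => Function.update (β j) l δ)) := by
    have h1 : f v' ∈ f '' convexHull ℝ (Set.range β) :=
      Set.mem_image_of_mem _ hv'
    rw [AffineMap.image_convexHull] at h1
    have : f '' Set.range β = Set.range (fun j => Function.update (β j) l δ) := by
      rw [← Set.range_comp]
      rfl
    rwa [this] at h1
  have hfv'eq : f v' = Function.update v l δ := by
    show Function.update v' l δ = _
    rw [hv'def]
    ext i; by_cases h : i = l <;> simp [Function.update, h]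
  have hseg : v ∈ segment ℝ v' (Function.update v l δ) := by
    rcases eq_or_lt_of_le (hδd.trans hdd) with h | h
    · -- δ = dbar, so v l = dbar and v = v'
      have hvl : v l = dbar := le_antisymm hdd (h ▸ hδd)
      have : v' = v := by rw [hv'def, ← hvl, Function.update_eq_self]
      rw [this]; exact left_mem_segment ℝ v _
    · have hne : dbar - δ ≠ 0 := by linarith
      refine ⟨(v l - δ) / (dbar - δ), (dbar - v l) / (dbar - δ), ?_, ?_, ?_, ?_⟩
      · exact div_nonneg (by linarith) (by linarith)
      · exact div_nonneg (by linarith) (by linarith)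
      · rw [← add_div]; field_simp; ring
      · ext i
        by_cases hi : i = l
        · subst hi
          simp only [Pi.add_apply, Pi.smul_apply, smul_eq_mul, hv'def,
            Function.update_self]
          field_simp
          ring
        · simp only [Pi.add_apply, Pi.smul_apply, smul_eq_mul, hv'def,
            Function.update_of_ne hi]
          field_simp
          ring
  have hconv : Convex ℝ (convexHull ℝ
      (Set.range β ∪ Set.range (fun j => Function.update (β j) l δ))) :=
    convex_convexHull ℝ _
  have h1 : v' ∈ convexHull ℝ
      (Set.range β ∪ Set.range (fun j => Function.update (β j) l δ)) :=
    convexHull_mono Set.subset_union_left hv'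
  have h2 : Function.update v l δ ∈ convexHull ℝ
      (Set.range β ∪ Set.range (fun j => Function.update (β j) l δ)) := by
    rw [← hfv'eq]
    exact convexHull_mono Set.subset_union_right hfv'
  exact hconv.segment_subset h1 h2 hseg
end

section
/- Fix q ∈ ℕ and a finite set Γ ⊂ (0,1]. The set of all sums Σ_{i=1}^{k} r_i c_i, where k ≤ q, r_i ∈ Γ with Σ r_i = 1, and c₁, …, c_k range over a fixed DCC set J ⊂ (0,1], is a DCC subset of (0,1]. -/
open scoped Pointwise

/-- Iterated sumset: `iterSum T n = T + T + ⋯ + T` (`n` copies), with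
`iterSum T 0 = {0}`. -/
def iterSum (T : Set ℝ) : ℕ → Set ℝ
  | 0 => {0}
  | n + 1 => iterSum T n + T

lemma iterSum_isPWO {T : Set ℝ} (hT : T.IsPWO) : ∀ n, (iterSum T n).IsPWO
  | 0 => Set.isPWO_singleton 0
  | n + 1 => (iterSum_isPWO hT n).add hT

lemma iterSum_mono {T : Set ℝ} (h0 : (0 : ℝ) ∈ T) {m n : ℕ} (hmn : m ≤ n) :
    iterSum T m ⊆ iterSum T n := by
  induction hmn with
  | refl => exact subset_rfl
  | step _ ih =>
      refine ih.trans fun x hx => ?_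
      exact ⟨x, hx, 0, h0, by simp⟩

lemma sum_mem_iterSum {T : Set ℝ} {k : ℕ} (g : Fin k → ℝ)
    (hg : ∀ i, g i ∈ T) : (∑ i, g i) ∈ iterSum T k := by
  induction k with
  | zero => simp [iterSum]
  | succ n ih =>
      rw [Fin.sum_univ_castSucc]
      exact ⟨_, ih _ (fun i => hg i.castSucc), _, hg (Fin.last n), rfl⟩

/-- The set of convex combinations `∑ rᵢ cᵢ` with at most `q` terms, weights
`rᵢ` from a finite set `Γ ⊆ (0,1]` summing to `1`, and entries `cᵢ` from a DCC
set `J ⊆ (0,1]`, is a DCC subset of `(0,1]`. -/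
theorem dcc_of_bounded_convex_combinations
    (q : ℕ) (Γ J : Set ℝ) (hΓfin : Γ.Finite)
    (hΓ : Γ ⊆ Set.Ioc 0 1) (hJ : J ⊆ Set.Ioc 0 1)
    (hJdcc : ¬ ∃ f : ℕ → ℝ, (∀ k, f k ∈ J) ∧ StrictAnti f)
    (S : Set ℝ)
    (hS : S = {x : ℝ | ∃ (k : ℕ), k ≤ q ∧ ∃ (r c : Fin k → ℝ),
        (∀ i, r i ∈ Γ) ∧ (∑ i, r i) = 1 ∧ (∀ i, c i ∈ J) ∧
        x = ∑ i, r i * c i}) :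
    S ⊆ Set.Ioc 0 1 ∧ ¬ ∃ f : ℕ → ℝ, (∀ k, f k ∈ S) ∧ StrictAnti f := by
  have hJwf : J.IsWF := by
    rw [Set.isWF_iff_no_descending_seq]
    intro f hf hmem
    exact hJdcc ⟨f, fun k => hmem k, hf⟩
  have hsub : S ⊆ Set.Ioc 0 1 := by
    intro x hx
    rw [hS] at hx
    obtain ⟨k, hk, r, c, hr, hsum, hc, hx⟩ := hx
    have hkpos : 0 < k := by
      rcases Nat.eq_zero_or_pos k with h | h
      · subst h; simp at hsum
      · exact h
    constructor
    · rw [hx]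
      apply Finset.sum_pos
      · intro i _
        exact mul_pos (hΓ (hr i)).1 (hJ (hc i)).1
      · haveI : Nonempty (Fin k) := Fin.pos_iff_nonempty.mp hkpos
        exact Finset.univ_nonempty
    · rw [hx, ← hsum]
      apply Finset.sum_le_sum
      intro i _
      exact mul_le_of_le_one_right (le_of_lt (hΓ (hr i)).1) (hJ (hc i)).2
  refine ⟨hsub, ?_⟩
  set T : Set ℝ := insert 0 (⋃ r ∈ hΓfin.toFinset, (fun c => r * c) '' J) with hTdef
  have h0T : (0 : ℝ) ∈ T := Set.mem_insert 0 _
  have hTpwo : T.IsPWO := by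
    apply Set.IsPWO.insert
    rw [Finset.isPWO_bUnion]
    intro r hrΓ
    apply Set.IsPWO.image_of_monotoneOn hJwf.isPWO
    intro a _ b _ hab
    exact mul_le_mul_of_nonneg_left hab (hΓ (hΓfin.mem_toFinset.mp hrΓ)).1.le
  have hSsub : S ⊆ iterSum T q := by
    intro x hx
    rw [hS] at hx
    obtain ⟨k, hk, r, c, hr, hsum, hc, hx⟩ := hx
    have hmem : (∑ i, r i * c i) ∈ iterSum T k := by
      apply sum_mem_iterSum
      intro i
      exact Set.mem_insert_of_mem _
        (Set.mem_biUnion (hΓfin.mem_toFinset.mpr (hr i)) ⟨c i, hc i, rfl⟩)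
    rw [hx]
    exact iterSum_mono h0T hk hmem
  rintro ⟨f, hf, hanti⟩
  have hwf : (iterSum T q).IsWF := (iterSum_isPWO hTpwo q).isWF
  rw [Set.isWF_iff_no_descending_seq] at hwf
  exact hwf f hanti fun n => hSsub (hf n)
end
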